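/- arXiv:1407.4934 — 3 statements merged into one kernel-verified Lean document; each statement's English description precedes it below -/
import Mathlib

section
/- Let v be a subharmonic function on a rectangle P = (-a,a) × (-b,b) in ℝ², and let M̃ : (-b,b) → ℝ be a measurable function with ∫_{-b}^{b} log⁺ M̃(y) dy < ∞, such that v(x,y) ≤ M̃(y) for all (x,y) ∈ P. Then for every compact set K ⊂ P there is a constant C, depending only on M̃ and the distance d(K, ∂P), such that sup_K v ≤ C. -/
open MeasureTheory

/-- `log⁺ x = max (log x) 0`. -/
noncomputable def logPlus (x : ℝ) : ℝ := max (Real.log x) 0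

/-- The open rectangle `(-a,a) × (-b,b)` viewed as a subset of `ℂ`. -/
def Rect (a b : ℝ) : Set ℂ := {z | |z.re| < a ∧ |z.im| < b}

/-- A function is subharmonic on `s` if it is upper semicontinuous on `s` and satisfies
the sub-mean-value inequality on closed disks contained in `s`. -/
def SubharmonicOn (v : ℂ → ℝ) (s : Set ℂ) : Prop :=
  UpperSemicontinuousOn v s ∧
    ∀ z r, 0 < r → Metric.closedBall z r ⊆ s →
      v z ≤ ⨍ w in Metric.closedBall z r, v w

/-!
Domar's iteration. Put `E n = {y ∈ (-b, b) | 2ⁿ < M̃ y}`; integrability of `log⁺ M̃` gives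
`∑ |E n| < ∞`. If `2 ^ (n + 1) ≤ v z` and the disc of radius `r > 6 |E n| / π` about `z` lies in
`P`, then `v ≥ 2 ^ (n + 2)` somewhere on that disc: otherwise `v ≤ 2ⁿ` off the horizontal slab
over `E n`, which meets the disc in area at most `2 r |E n|`, and the sub-mean-value inequality
fails. Starting from a point of `K` where `v > 2 ^ (n₀ + 1)`, with `n₀` so large that the radii
from `n₀` on add up to less than `d(K, ∂P)`, this produces a Cauchy sequence in `P` along which
`v → ∞`, contradicting upper semicontinuity at its limit.
-/

open Metric Filter
open scoped ENNReal Topology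

lemma tsum_ite_two_pow_lt_le (t : ℝ) :
    ∑' n : ℕ, (if (2 : ℝ) ^ n < t then 1 else 0 : ℝ≥0∞) ≤
      ENNReal.ofReal (logPlus t / Real.log 2 + 1) := by
  set L := logPlus t / Real.log 2
  have hL : 0 ≤ L := div_nonneg (le_max_right _ _) (Real.log_nonneg one_le_two)
  have hlt : ∀ n : ℕ, (2 : ℝ) ^ n < t → n < ⌊L⌋₊ + 1 := by
    intro n hn
    have hlog : (n : ℝ) * Real.log 2 ≤ logPlus t := by
      rw [← Real.log_pow]
      exact (Real.log_lt_log (by positivity) hn).le.trans (le_max_left _ _)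
    exact Nat.lt_succ_of_le (Nat.le_floor ((le_div_iff₀ (Real.log_pos one_lt_two)).2 hlog))
  rw [tsum_eq_sum (s := Finset.range (⌊L⌋₊ + 1))
    fun n hn => if_neg fun h => hn (Finset.mem_range.2 (hlt n h))]
  calc ∑ n ∈ Finset.range (⌊L⌋₊ + 1), (if (2 : ℝ) ^ n < t then 1 else 0 : ℝ≥0∞)
      ≤ ∑ _n ∈ Finset.range (⌊L⌋₊ + 1), 1 := Finset.sum_le_sum fun n _ => by split_ifs <;> simp
    _ = ((⌊L⌋₊ + 1 : ℕ) : ℝ≥0∞) := by simp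
    _ ≤ ENNReal.ofReal (L + 1) := by
      rw [← ENNReal.ofReal_natCast]
      exact ENNReal.ofReal_le_ofReal (by push_cast; linarith [Nat.floor_le hL])

theorem tsum_measure_two_pow_lt_ne_top {α : Type*} [MeasurableSpace α] {μ : Measure α}
    [IsFiniteMeasure μ] {f : α → ℝ} (hf : Measurable f)
    (hlog : Integrable (fun x => logPlus (f x)) μ) :
    ∑' n : ℕ, μ {x | (2 : ℝ) ^ n < f x} ≠ ∞ := by
  have hmeas : ∀ n : ℕ, MeasurableSet {x | (2 : ℝ) ^ n < f x} :=
    fun n => measurableSet_lt measurable_const hf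
  have hbound : Integrable (fun x => logPlus (f x) / Real.log 2 + 1) μ :=
    (hlog.div_const _).add (integrable_const 1)
  refine (lt_of_le_of_lt ?_ hbound.lintegral_lt_top).ne
  calc ∑' n : ℕ, μ {x | (2 : ℝ) ^ n < f x}
      = ∫⁻ x, ∑' n : ℕ, {x | (2 : ℝ) ^ n < f x}.indicator 1 x ∂μ := by
        rw [lintegral_tsum fun n => (measurable_one.indicator (hmeas n)).aemeasurable]
        simp [lintegral_indicator_one (hmeas _)]
    _ ≤ _ := lintegral_mono fun x => by
        simpa [Set.indicator_apply] using tsum_ite_two_pow_lt_le (f x)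

lemma volume_re_preimage_inter_im_preimage {s t : Set ℝ} (hs : MeasurableSet s)
    (ht : MeasurableSet t) :
    volume (Complex.re ⁻¹' s ∩ Complex.im ⁻¹' t) = volume s * volume t := by
  rw [show Complex.re ⁻¹' s ∩ Complex.im ⁻¹' t = Complex.measurableEquivRealProd ⁻¹' (s ×ˢ t)
    from rfl, Complex.volume_preserving_equiv_real_prod.measure_preimage
    (hs.prod ht).nullMeasurableSet, Measure.volume_eq_prod, Measure.prod_prod]

lemma volume_closedBall_inter_im_preimage_le (z : ℂ) (r : ℝ) {E : Set ℝ}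
    (hE : MeasurableSet E) :
    volume (closedBall z r ∩ Complex.im ⁻¹' E) ≤ ENNReal.ofReal (2 * r) * volume E := by
  have hre : closedBall z r ⊆ Complex.re ⁻¹' Set.Icc (z.re - r) (z.re + r) := fun w hw => by
    have h := (Complex.abs_re_le_norm (w - z)).trans (mem_closedBall_iff_norm.1 hw)
    rw [Complex.sub_re, abs_sub_le_iff] at h
    exact ⟨by linarith, by linarith⟩
  calc volume (closedBall z r ∩ Complex.im ⁻¹' E)
      ≤ volume (Complex.re ⁻¹' Set.Icc (z.re - r) (z.re + r) ∩ Complex.im ⁻¹' E) :=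
        measure_mono (Set.inter_subset_inter_left _ hre)
    _ = ENNReal.ofReal (2 * r) * volume E := by
        rw [volume_re_preimage_inter_im_preimage measurableSet_Icc hE, Real.volume_Icc]
        ring_nf

lemma Complex.measureReal_closedBall (z : ℂ) {r : ℝ} (hr : 0 ≤ r) :
    volume.real (closedBall z r) = Real.pi * r ^ 2 := by
  simp [Measure.real, ENNReal.toReal_ofReal hr, mul_comm]

lemma setIntegral_le_const_add_indicator {α : Type*} [MeasurableSpace α] {μ : Measure α}
    {B S : Set α} (hB : MeasurableSet B) (hBfin : μ B ≠ ∞) (hS : MeasurableSet S)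
    {v : α → ℝ} {c d : ℝ} (hc : 0 ≤ c) (hd : 0 ≤ d)
    (hv : ∀ x ∈ B, v x ≤ c + S.indicator (fun _ => d) x) :
    ∫ x in B, v x ∂μ ≤ c * μ.real B + d * μ.real (B ∩ S) := by
  have hc' : IntegrableOn (fun _ => c) B μ := integrableOn_const hBfin
  have hd' : IntegrableOn (S.indicator fun _ => d) B μ := (integrableOn_const hBfin).indicator hS
  by_cases hint : IntegrableOn v B μ
  · calc ∫ x in B, v x ∂μ ≤ ∫ x in B, (c + S.indicator (fun _ => d) x) ∂μ :=
          setIntegral_mono_on hint (hc'.add hd') hB hv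
      _ = c * μ.real B + d * μ.real (B ∩ S) := by
          rw [integral_add hc' hd', setIntegral_const, setIntegral_indicator hS, setIntegral_const,
            smul_eq_mul, smul_eq_mul, mul_comm c, mul_comm d]
  · rw [integral_undef hint]
    positivity

lemma SubharmonicOn.mul_le_setIntegral {v : ℂ → ℝ} {s : Set ℂ} (hv : SubharmonicOn v s)
    {z : ℂ} {r : ℝ} (hr : 0 < r) (hball : closedBall z r ⊆ s) :
    v z * (Real.pi * r ^ 2) ≤ ∫ w in closedBall z r, v w := by
  have h := hv.2 z r hr hball
  rwa [setAverage_eq, smul_eq_mul, Complex.measureReal_closedBall z hr.le,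
    le_inv_mul_iff₀ (by positivity), mul_comm] at h

lemma SubharmonicOn.exists_four_mul_le {v : ℂ → ℝ} {s : Set ℂ} (hv : SubharmonicOn v s)
    {E : Set ℝ} (hE : MeasurableSet E) (hEfin : volume E ≠ ∞) {t : ℝ} (ht : 0 < t)
    (hvE : ∀ z ∈ s, z.im ∉ E → v z ≤ t) {z : ℂ} {r : ℝ}
    (hr : 6 * volume.real E / Real.pi < r) (hball : closedBall z r ⊆ s) (hz : 2 * t ≤ v z) :
    ∃ w ∈ closedBall z r, 4 * t ≤ v w := by
  by_contra! hlt
  have hr0 : 0 < r := lt_of_le_of_lt (by positivity) hr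
  have hS : MeasurableSet (Complex.im ⁻¹' E) := measurableSet_preimage Complex.measurable_im hE
  have hbound :
      ∀ w ∈ closedBall z r, v w ≤ t + (Complex.im ⁻¹' E).indicator (fun _ => 3 * t) w := by
    intro w hw
    by_cases hwE : w.im ∈ E
    · rw [Set.indicator_of_mem (show w ∈ Complex.im ⁻¹' E from hwE)]
      linarith [hlt w hw]
    · rw [Set.indicator_of_notMem (show w ∉ Complex.im ⁻¹' E from hwE), add_zero]
      exact hvE w (hball hw) hwE
  have hupper := setIntegral_le_const_add_indicator measurableSet_closedBall
    (measure_closedBall_lt_top (μ := volume)).ne hS ht.le (by positivity) hbound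
  have hslab : volume.real (closedBall z r ∩ Complex.im ⁻¹' E) ≤ 2 * r * volume.real E := by
    have h := ENNReal.toReal_mono (ENNReal.mul_ne_top ENNReal.ofReal_ne_top hEfin)
      (volume_closedBall_inter_im_preimage_le z r hE)
    rwa [ENNReal.toReal_mul, ENNReal.toReal_ofReal (by positivity)] at h
  have hlower := hv.mul_le_setIntegral hr0 hball
  rw [Complex.measureReal_closedBall z hr0.le] at hupper
  rw [div_lt_iff₀ Real.pi_pos] at hr
  have h2t := mul_le_mul_of_nonneg_right hz (by positivity : 0 ≤ Real.pi * r ^ 2)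
  have h3t := mul_le_mul_of_nonneg_left hslab (by positivity : 0 ≤ 3 * t)
  have hpi := mul_lt_mul_of_pos_left hr (mul_pos ht hr0)
  nlinarith

theorem UpperSemicontinuousOn.lt_of_forall_exists_mem_closedBall_le {X : Type*} [MetricSpace X]
    [CompleteSpace X] {v : X → ℝ} {s : Set X} (hv : UpperSemicontinuousOn v s) {ρ : ℕ → ℝ}
    (hρ0 : ∀ k, 0 ≤ ρ k) (hρ : Summable ρ) {c : ℕ → ℝ} (hc : Tendsto c atTop atTop)
    (hstep : ∀ k w, closedBall w (ρ k) ⊆ s → c k ≤ v w →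
      ∃ w' ∈ closedBall w (ρ k), c (k + 1) ≤ v w')
    {z : X} (hz : closedBall z (∑' k, ρ k) ⊆ s) : v z < c 0 := by
  by_contra! h
  have hball : ∀ k w, dist w z ≤ ∑ j ∈ Finset.range k, ρ j →
      closedBall w (ρ k) ⊆ closedBall z (∑' k, ρ k) := fun k w hw =>
    closedBall_subset_closedBall' <| by
      linarith [Finset.sum_range_succ ρ k, hρ.sum_le_tsum (Finset.range (k + 1)) fun j _ => hρ0 j]
  have hnext : ∀ k w, c k ≤ v w ∧ dist w z ≤ ∑ j ∈ Finset.range k, ρ j →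
      ∃ w', dist w' w ≤ ρ k ∧ c (k + 1) ≤ v w' ∧ dist w' z ≤ ∑ j ∈ Finset.range (k + 1), ρ j := by
    rintro k w ⟨hvw, hwz⟩
    obtain ⟨w', hw', hvw'⟩ := hstep k w ((hball k w hwz).trans hz) hvw
    refine ⟨w', hw', hvw', ?_⟩
    rw [Finset.sum_range_succ]
    linarith [dist_triangle w' w z, mem_closedBall.1 hw']
  choose! next hnext using hnext
  let zs : ℕ → X := fun k => Nat.rec z (fun k w => next k w) k
  have hzs : ∀ k, c k ≤ v (zs k) ∧ dist (zs k) z ≤ ∑ j ∈ Finset.range k, ρ j := by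
    intro k
    induction k with
    | zero => simpa [zs] using h
    | succ k ih => exact (hnext k (zs k) ih).2
  have hmem : ∀ k, zs k ∈ closedBall z (∑' k, ρ k) := fun k =>
    mem_closedBall.2 ((hzs k).2.trans (hρ.sum_le_tsum _ fun j _ => hρ0 j))
  obtain ⟨zlim, hlim⟩ := cauchySeq_tendsto_of_complete <|
    cauchySeq_of_dist_le_of_summable (f := zs) ρ
      (fun k => dist_comm (zs k) (zs (k + 1)) ▸ (hnext k (zs k) (hzs k)).1) hρ
  have hzlim : zlim ∈ s := hz (isClosed_closedBall.mem_of_tendsto hlim (Eventually.of_forall hmem))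
  have hlim' : Tendsto zs atTop (𝓝[s] zlim) :=
    tendsto_nhdsWithin_iff.2 ⟨hlim, Eventually.of_forall fun k => hz (hmem k)⟩
  obtain ⟨k, hvk, hck⟩ := ((hlim'.eventually (hv zlim hzlim _ (lt_add_one (v zlim)))).and
    (hc.eventually_gt_atTop (v zlim + 1))).exists
  linarith [(hzs k).1]

theorem stmt0_general (b : ℝ) (Mt : ℝ → ℝ) (hMmeas : Measurable Mt)
    (hMint : IntegrableOn (fun y => logPlus (Mt y)) (Set.Ioo (-b) b))
    (δ : ℝ) (hδ : 0 < δ) :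
    ∃ C : ℝ, ∀ (a : ℝ), 0 < a → ∀ v : ℂ → ℝ, SubharmonicOn v (Rect a b) →
      (∀ z ∈ Rect a b, v z ≤ Mt z.im) →
      ∀ K : Set ℂ, IsCompact K → K ⊆ Rect a b →
        (∀ z ∈ K, δ ≤ Metric.infDist z (Rect a b)ᶜ) →
        ∀ z ∈ K, v z ≤ C := by
  set E : ℕ → Set ℝ := fun n => {y | (2 : ℝ) ^ n < Mt y} ∩ Set.Ioo (-b) b
  have hE : ∀ n, MeasurableSet (E n) := fun n =>
    (measurableSet_lt measurable_const hMmeas).inter measurableSet_Ioo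
  have hEfin : ∀ n, volume (E n) ≠ ∞ := fun n =>
    ((measure_mono Set.inter_subset_right).trans_lt (measure_Ioo_lt_top (μ := volume))).ne
  have hEsum : Summable fun n => volume.real (E n) := by
    have := isFiniteMeasure_restrict.2 (measure_Ioo_lt_top (μ := volume) (a := -b) (b := b)).ne
    refine ENNReal.summable_toReal ?_
    simpa [E, Measure.restrict_apply (measurableSet_lt measurable_const hMmeas)] using
      tsum_measure_two_pow_lt_ne_top hMmeas hMint
  set ρ : ℕ → ℝ := fun n => 6 * volume.real (E n) / Real.pi + (1 / 2) ^ n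
  have hρ : Summable ρ := ((hEsum.mul_left 6).div_const _).add summable_geometric_two
  obtain ⟨n₀, hn₀⟩ : ∃ n₀, ∑' k, ρ (k + n₀) < δ :=
    ((tendsto_sum_nat_add ρ).eventually (gt_mem_nhds hδ)).exists
  refine ⟨2 ^ (n₀ + 1), fun a _ v hv hvM K _ _ hKδ z hz => ?_⟩
  have hstep : ∀ k w, closedBall w (ρ (k + n₀)) ⊆ Rect a b → (2 : ℝ) ^ (k + n₀ + 1) ≤ v w →
      ∃ w' ∈ closedBall w (ρ (k + n₀)), (2 : ℝ) ^ (k + 1 + n₀ + 1) ≤ v w' := by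
    intro k w hball hw
    have hvE : ∀ z ∈ Rect a b, z.im ∉ E (k + n₀) → v z ≤ 2 ^ (k + n₀) := fun z hz hzE =>
      (hvM z hz).trans (not_lt.1 fun h => hzE ⟨h, abs_lt.1 hz.2⟩)
    obtain ⟨w', hw', hvw'⟩ := hv.exists_four_mul_le (hE _) (hEfin _) (by positivity) hvE
      (lt_add_of_pos_right _ (by positivity)) hball (by rwa [← pow_succ'])
    exact ⟨w', hw', by rw [show k + 1 + n₀ + 1 = k + n₀ + 2 by omega, pow_add]; linarith⟩
  have hlevels : Tendsto (fun k : ℕ => (2 : ℝ) ^ (k + n₀ + 1)) atTop atTop :=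
    (tendsto_pow_atTop_atTop_of_one_lt one_lt_two).comp (tendsto_add_atTop_nat (n₀ + 1))
  have hz_ball : closedBall z (∑' k, ρ (k + n₀)) ⊆ Rect a b :=
    (closedBall_subset_ball (hn₀.trans_le (hKδ z hz))).trans ball_infDist_compl_subset
  simpa using (hv.1.lt_of_forall_exists_mem_closedBall_le (fun k => by positivity)
    ((summable_nat_add_iff n₀).2 hρ) hlevels hstep hz_ball).le

/-- Domar's lemma: a subharmonic function on a rectangle, dominated by a majorant `M̃(y)`
depending only on the imaginary part with `∫ log⁺ M̃ < ∞`, is bounded above on every compact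
subset `K`, by a constant depending only on `M̃` (with its domain `(-b,b)`) and `d(K, ∂P)`. -/
theorem stmt0 (b : ℝ) (hb : 0 < b) (Mt : ℝ → ℝ) (hMmeas : Measurable Mt)
    (hMint : IntegrableOn (fun y => logPlus (Mt y)) (Set.Ioo (-b) b))
    (δ : ℝ) (hδ : 0 < δ) :
    ∃ C : ℝ, ∀ (a : ℝ), 0 < a → ∀ v : ℂ → ℝ, SubharmonicOn v (Rect a b) →
      (∀ z ∈ Rect a b, v z ≤ Mt z.im) →
      ∀ K : Set ℂ, IsCompact K → K ⊆ Rect a b →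
        (∀ z ∈ K, δ ≤ Metric.infDist z (Rect a b)ᶜ) →
        ∀ z ∈ K, v z ≤ C :=
  stmt0_general b Mt hMmeas hMint δ hδ
end

section
/- Let u : Ω → ℝ be a harmonic function on an axially-symmetric domain Ω ⊂ ℝ⁴ (invariant under orthogonal transformations of the first three coordinates) that is axially symmetric, i.e. u(x₁,x₂,x₃,y) = w(√(x₁²+x₂²+x₃²), y) for some function w. Let Ω̃ = {(ρ, h) ∈ ℝ² : (x, h) ∈ Ω for some x ∈ ℝ³ with |x| = |ρ|}. Then ṽ(ρ, h) := ρ w(|ρ|, h) extends to a harmonic function on Ω̃ which is odd in ρ. -/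
/-- Harmonicity on a subset of `ℝⁿ` (Euclidean space): `C²` and vanishing Laplacian. -/
def HarmonicOnE {n : ℕ} (u : EuclideanSpace ℝ (Fin n) → ℝ)
    (s : Set (EuclideanSpace ℝ (Fin n))) : Prop :=
  ContDiffOn ℝ 2 u s ∧ ∀ x ∈ s,
    (∑ i : Fin n, fderiv ℝ (fun y => fderiv ℝ u y (EuclideanSpace.single i 1)) x
      (EuclideanSpace.single i 1)) = 0

/-- Partial derivative in the first coordinate of a function on `ℝ × ℝ`. -/
noncomputable def pd1 (u : ℝ × ℝ → ℝ) (p : ℝ × ℝ) : ℝ := fderiv ℝ u p (1, 0)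

/-- Partial derivative in the second coordinate of a function on `ℝ × ℝ`. -/
noncomputable def pd2 (u : ℝ × ℝ → ℝ) (p : ℝ × ℝ) : ℝ := fderiv ℝ u p (0, 1)

/-- Harmonicity on a subset of `ℝ²`: `C²` and vanishing Laplacian. -/
def HarmonicOn2 (u : ℝ × ℝ → ℝ) (s : Set (ℝ × ℝ)) : Prop :=
  ContDiffOn ℝ 2 u s ∧ ∀ p ∈ s, pd1 (pd1 u) p + pd2 (pd2 u) p = 0

/-- The radius in the first three coordinates of a point of `ℝ⁴`. -/
noncomputable def rad4 (p : EuclideanSpace ℝ (Fin 4)) : ℝ :=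
  Real.sqrt ((p 0) ^ 2 + (p 1) ^ 2 + (p 2) ^ 2)

/-!
On the plane `{(ρ, 0, 0, h)}` the function `u` restricts to `g(ρ, h) = w(|ρ|, h)`, and
`ṽ = ρ g` is harmonic exactly when `ρ (g_ρρ + g_hh) + 2 g_ρ = 0`. Since `u` is invariant under the
rotations of the `(x₀, xⱼ)`-planes (`j = 1, 2`), differentiating `Du(y)(Aⱼ y) = 0` along `eⱼ`, where
`Aⱼ` generates these rotations, gives `u₀ = ρ uⱼⱼ` at the points `(ρ, 0, 0, h)`. Hence
`ρ Δu = ρ (g_ρρ + g_hh) + 2 g_ρ` there, and `Δu = 0` is the required equation.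
-/

open Filter Topology

section Calculus

variable {E F G : Type*} [NormedAddCommGroup E] [NormedSpace ℝ E]
  [NormedAddCommGroup F] [NormedSpace ℝ F] [NormedAddCommGroup G] [NormedSpace ℝ G]

theorem fderiv_clm_apply_const_apply {c : E → F →L[ℝ] G} {x : E} (hc : DifferentiableAt ℝ c x)
    (v : F) (m : E) : fderiv ℝ (fun y => c y v) x m = fderiv ℝ c x m v := by
  simp [fderiv_clm_apply hc (differentiableAt_const v)]

theorem fderiv_apply_eq_zero_of_eventually_const {u : E → F} {c : ℝ → E} {x v : E}
    (hc0 : c 0 = x) (hu : DifferentiableAt ℝ u x) (hc : HasDerivAt c v 0)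
    (hconst : ∀ᶠ θ in 𝓝 0, u (c θ) = u x) : fderiv ℝ u x v = 0 := by
  subst hc0
  exact (hu.hasFDerivAt.comp_hasDerivAt 0 hc).unique
    ((hasDerivAt_const 0 (u (c 0))).congr_of_eventuallyEq hconst)

theorem fderiv_fderiv_apply_add_fderiv_apply_eq_zero {u : E → F} {x : E} (A : E →L[ℝ] E)
    (hu : DifferentiableAt ℝ (fderiv ℝ u) x)
    (hA : (fun y => fderiv ℝ u y (A y)) =ᶠ[𝓝 x] fun _ => 0) (v : E) :
    fderiv ℝ (fderiv ℝ u) x v (A x) + fderiv ℝ u x (A v) = 0 := by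
  have h := congrArg (· v) (fderiv_clm_apply hu A.differentiableAt)
  simp only [hA.fderiv_eq, fderiv_const_apply, A.fderiv] at h
  simpa [add_comm] using h.symm

theorem fderiv_comp_clm_apply {u : E → G} (L : F →L[ℝ] E) {p : F}
    (hu : DifferentiableAt ℝ u (L p)) (n : F) :
    fderiv ℝ (u ∘ L) p n = fderiv ℝ u (L p) (L n) := by
  simp [fderiv_comp p hu L.differentiableAt]

theorem fderiv_fderiv_comp_clm_apply {u : E → G} (L : F →L[ℝ] E) {p : F}
    (hu : ∀ᶠ y in 𝓝 (L p), DifferentiableAt ℝ u y)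
    (hu' : DifferentiableAt ℝ (fderiv ℝ u) (L p)) (m n : F) :
    fderiv ℝ (fun q => fderiv ℝ (u ∘ L) q n) p m = fderiv ℝ (fderiv ℝ u) (L p) (L m) (L n) := by
  have h : (fun q => fderiv ℝ (u ∘ L) q n) =ᶠ[𝓝 p] fun q => (fderiv ℝ u ∘ L) q (L n) :=
    (L.continuous.continuousAt.eventually hu).mono fun q hq => fderiv_comp_clm_apply L hq n
  rw [h.fderiv_eq, fderiv_clm_apply_const_apply (hu'.comp p L.differentiableAt),
    fderiv_comp p hu' L.differentiableAt, L.fderiv]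
  rfl

end Calculus

section PartialDerivatives

variable {f g : ℝ × ℝ → ℝ} {p : ℝ × ℝ}

theorem pd1_add (hf : DifferentiableAt ℝ f p) (hg : DifferentiableAt ℝ g p) :
    pd1 (fun q => f q + g q) p = pd1 f p + pd1 g p := by
  simp [pd1, fderiv_fun_add hf hg]

theorem pd1_fst_mul (hg : DifferentiableAt ℝ g p) :
    pd1 (fun q => q.1 * g q) p = g p + p.1 * pd1 g p := by
  simp [pd1, fderiv_fun_mul differentiableAt_fst hg, fderiv_fst, add_comm]

theorem pd2_fst_mul (hg : DifferentiableAt ℝ g p) :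
    pd2 (fun q => q.1 * g q) p = p.1 * pd2 g p := by
  simp [pd2, fderiv_fun_mul differentiableAt_fst hg, fderiv_fst]

theorem pd1_pd1_add_pd2_pd2_fst_mul (hg : ContDiffAt ℝ 2 g p) :
    pd1 (pd1 fun q => q.1 * g q) p + pd2 (pd2 fun q => q.1 * g q) p =
      p.1 * (pd1 (pd1 g) p + pd2 (pd2 g) p) + 2 * pd1 g p := by
  have hg_near : ∀ᶠ q in 𝓝 p, DifferentiableAt ℝ g q :=
    (hg.eventually (by simp)).mono fun q hq => hq.differentiableAt (by norm_num)
  have hDg : DifferentiableAt ℝ (fderiv ℝ g) p :=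
    (hg.fderiv_right (m := 1) (by norm_num)).differentiableAt (by norm_num)
  have hpd1 : DifferentiableAt ℝ (pd1 g) p := hDg.clm_apply (differentiableAt_const _)
  have hpd2 : DifferentiableAt ℝ (pd2 g) p := hDg.clm_apply (differentiableAt_const _)
  have h1 : pd1 (fun q => q.1 * g q) =ᶠ[𝓝 p] fun q => g q + q.1 * pd1 g q :=
    hg_near.mono fun q hq => pd1_fst_mul hq
  have h2 : pd2 (fun q => q.1 * g q) =ᶠ[𝓝 p] fun q => q.1 * pd2 g q :=
    hg_near.mono fun q hq => pd2_fst_mul hq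
  have hpd1_pd1 : pd1 (pd1 fun q => q.1 * g q) p = 2 * pd1 g p + p.1 * pd1 (pd1 g) p := by
    rw [pd1, h1.fderiv_eq, ← pd1, pd1_add hg_near.self_of_nhds (differentiableAt_fst.fun_mul hpd1),
      pd1_fst_mul hpd1]
    ring
  have hpd2_pd2 : pd2 (pd2 fun q => q.1 * g q) p = p.1 * pd2 (pd2 g) p := by
    rw [pd2, h2.fderiv_eq, ← pd2, pd2_fst_mul hpd2]
  rw [hpd1_pd1, hpd2_pd2]
  ring

theorem harmonicOn2_fst_mul {s : Set (ℝ × ℝ)} (hs : IsOpen s) (hg : ContDiffOn ℝ 2 g s)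
    (hlap : ∀ p ∈ s, p.1 * (pd1 (pd1 g) p + pd2 (pd2 g) p) + 2 * pd1 g p = 0) :
    HarmonicOn2 (fun q => q.1 * g q) s :=
  ⟨contDiffOn_fst.mul hg, fun p hp => by
    rw [pd1_pd1_add_pd2_pd2_fst_mul (hg.contDiffAt (hs.mem_nhds hp))]
    exact hlap p hp⟩

theorem HarmonicOn2.congr {s : Set (ℝ × ℝ)} (hs : IsOpen s) (hf : HarmonicOn2 f s)
    (hfg : Set.EqOn g f s) : HarmonicOn2 g s := by
  refine ⟨hf.1.congr hfg, fun p hp => ?_⟩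
  have h : g =ᶠ[𝓝 p] f := eventuallyEq_of_mem (hs.mem_nhds hp) hfg
  have h1 : pd1 g =ᶠ[𝓝 p] pd1 f := (h.fderiv (𝕜 := ℝ)).mono fun q hq => by simp only [pd1, hq]
  have h2 : pd2 g =ᶠ[𝓝 p] pd2 f := (h.fderiv (𝕜 := ℝ)).mono fun q hq => by simp only [pd2, hq]
  simpa only [pd1, pd2, h1.fderiv_eq, h2.fderiv_eq] using hf.2 p hp

end PartialDerivatives

section AxialSymmetry

open EuclideanSpace

noncomputable def planeEmb : ℝ × ℝ →L[ℝ] EuclideanSpace ℝ (Fin 4) :=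
  (ContinuousLinearMap.fst ℝ ℝ ℝ).smulRight (single 0 1) +
    (ContinuousLinearMap.snd ℝ ℝ ℝ).smulRight (single 3 1)

@[simp]
theorem planeEmb_apply (q : ℝ × ℝ) (i : Fin 4) :
    planeEmb q i = if i = 0 then q.1 else if i = 3 then q.2 else 0 := by
  fin_cases i <;> simp [planeEmb]

theorem planeEmb_one_zero : planeEmb (1, 0) = single 0 1 := by
  ext i; fin_cases i <;> simp

theorem planeEmb_zero_one : planeEmb (0, 1) = single 3 1 := by
  ext i; fin_cases i <;> simp

theorem rad4_planeEmb (q : ℝ × ℝ) : rad4 (planeEmb q) = |q.1| := by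
  simp [rad4, Real.sqrt_sq_eq_abs]

theorem axialSection_eq_preimage_planeEmb {Ω : Set (EuclideanSpace ℝ (Fin 4))}
    (hΩsym : ∀ p ∈ Ω, ∀ q : EuclideanSpace ℝ (Fin 4), rad4 q = rad4 p → q 3 = p 3 → q ∈ Ω) :
    {q : ℝ × ℝ | ∃ p ∈ Ω, rad4 p = |q.1| ∧ p 3 = q.2} = planeEmb ⁻¹' Ω := by
  ext q
  refine ⟨fun ⟨p, hp, hrad, h3⟩ => hΩsym p hp _ ?_ ?_, fun hq => ⟨_, hq, rad4_planeEmb q, ?_⟩⟩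
  · rw [rad4_planeEmb, hrad]
  · simp [h3]
  · simp

noncomputable def planeRotGen (j : Fin 4) :
    EuclideanSpace ℝ (Fin 4) →L[ℝ] EuclideanSpace ℝ (Fin 4) :=
  (proj 0).smulRight (single j 1) - (proj j).smulRight (single 0 1)

theorem planeRotGen_apply (j : Fin 4) (x : EuclideanSpace ℝ (Fin 4)) :
    planeRotGen j x = x 0 • single j 1 - x j • single 0 1 := by
  simp [planeRotGen]

theorem planeRotGen_single_self {j : Fin 4} (hj : j ≠ 0) :
    planeRotGen j (single j 1) = -single 0 1 := by
  simp [planeRotGen_apply, hj]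

theorem planeRotGen_of_apply_eq_zero {j : Fin 4} {x : EuclideanSpace ℝ (Fin 4)} (hxj : x j = 0) :
    planeRotGen j x = x 0 • single j 1 := by
  simp [planeRotGen_apply, hxj]

-- Rotation by `θ` in the `(x₀, xⱼ)`-plane, written as a perturbation of the identity.
noncomputable def planeRot (j : Fin 4) (θ : ℝ) (x : EuclideanSpace ℝ (Fin 4)) :
    EuclideanSpace ℝ (Fin 4) :=
  x + (Real.cos θ - 1) • (x 0 • single 0 1 + x j • single j 1) + Real.sin θ • planeRotGen j x

theorem planeRot_zero (j : Fin 4) (x : EuclideanSpace ℝ (Fin 4)) : planeRot j 0 x = x := by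
  simp [planeRot]

theorem hasDerivAt_planeRot (j : Fin 4) (x : EuclideanSpace ℝ (Fin 4)) :
    HasDerivAt (fun θ => planeRot j θ x) (planeRotGen j x) 0 := by
  have h : HasDerivAt (fun θ => planeRot j θ x)
      (0 + (-Real.sin 0) • (x 0 • single 0 1 + x j • single j 1) + Real.cos 0 • planeRotGen j x)
      0 :=
    ((hasDerivAt_const 0 x).add (((Real.hasDerivAt_cos 0).sub_const 1).smul_const _)).add
      ((Real.hasDerivAt_sin 0).smul_const _)
  simpa using h

theorem planeRot_apply_three {j : Fin 4} (hj : j = 1 ∨ j = 2) (θ : ℝ)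
    (x : EuclideanSpace ℝ (Fin 4)) : planeRot j θ x 3 = x 3 := by
  rcases hj with rfl | rfl <;> simp [planeRot, planeRotGen_apply]

theorem rad4_planeRot {j : Fin 4} (hj : j = 1 ∨ j = 2) (θ : ℝ) (x : EuclideanSpace ℝ (Fin 4)) :
    rad4 (planeRot j θ x) = rad4 x := by
  have hθ := Real.sin_sq_add_cos_sq θ
  unfold rad4
  congr 1
  rcases hj with rfl | rfl <;> simp [planeRot, planeRotGen_apply]
  · linear_combination (x 0 ^ 2 + x 1 ^ 2) * hθ
  · linear_combination (x 0 ^ 2 + x 2 ^ 2) * hθ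

end AxialSymmetry

section AxialHarmonic

open EuclideanSpace

variable {Ω : Set (EuclideanSpace ℝ (Fin 4))} {u : EuclideanSpace ℝ (Fin 4) → ℝ}

theorem fderiv_apply_planeRotGen_eq_zero
    (hΩsym : ∀ p ∈ Ω, ∀ q : EuclideanSpace ℝ (Fin 4), rad4 q = rad4 p → q 3 = p 3 → q ∈ Ω)
    {w : ℝ → ℝ → ℝ} (hw : ∀ p ∈ Ω, u p = w (rad4 p) (p 3))
    {j : Fin 4} (hj : j = 1 ∨ j = 2) {x : EuclideanSpace ℝ (Fin 4)} (hx : x ∈ Ω)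
    (hu : DifferentiableAt ℝ u x) : fderiv ℝ u x (planeRotGen j x) = 0 := by
  have hinv (θ : ℝ) : u (planeRot j θ x) = u x := by
    rw [hw _ (hΩsym x hx _ (rad4_planeRot hj θ x) (planeRot_apply_three hj θ x)), hw x hx,
      rad4_planeRot hj, planeRot_apply_three hj]
  exact fderiv_apply_eq_zero_of_eventually_const (planeRot_zero j x) hu (hasDerivAt_planeRot j x)
    (Eventually.of_forall hinv)

theorem fderiv_single_zero_eq_mul_fderiv_fderiv {j : Fin 4} (hj : j ≠ 0)
    {x : EuclideanSpace ℝ (Fin 4)} (hu : DifferentiableAt ℝ (fderiv ℝ u) x)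
    (hrot : (fun y => fderiv ℝ u y (planeRotGen j y)) =ᶠ[𝓝 x] fun _ => 0) (hxj : x j = 0) :
    fderiv ℝ u x (single 0 1) = x 0 * fderiv ℝ (fderiv ℝ u) x (single j 1) (single j 1) := by
  have h := fderiv_fderiv_apply_add_fderiv_apply_eq_zero (planeRotGen j) hu hrot (single j 1)
  rw [planeRotGen_single_self hj, planeRotGen_of_apply_eq_zero hxj, map_smul, map_neg] at h
  simp only [smul_eq_mul] at h
  linarith

theorem HarmonicOnE.axial_laplacian_eq_zero (hΩopen : IsOpen Ω)
    (hΩsym : ∀ p ∈ Ω, ∀ q : EuclideanSpace ℝ (Fin 4), rad4 q = rad4 p → q 3 = p 3 → q ∈ Ω)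
    (hu : HarmonicOnE u Ω) {w : ℝ → ℝ → ℝ} (hw : ∀ p ∈ Ω, u p = w (rad4 p) (p 3))
    {x : EuclideanSpace ℝ (Fin 4)} (hx : x ∈ Ω) (hx1 : x 1 = 0) (hx2 : x 2 = 0) :
    x 0 * (fderiv ℝ (fderiv ℝ u) x (single 0 1) (single 0 1) +
        fderiv ℝ (fderiv ℝ u) x (single 3 1) (single 3 1)) +
      2 * fderiv ℝ u x (single 0 1) = 0 := by
  have hD2 : DifferentiableAt ℝ (fderiv ℝ u) x :=
    ((hu.1.contDiffAt (hΩopen.mem_nhds hx)).fderiv_right (m := 1) le_rfl).differentiableAt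
      one_ne_zero
  have hrot {j : Fin 4} (hj : j = 1 ∨ j = 2) :
      (fun y => fderiv ℝ u y (planeRotGen j y)) =ᶠ[𝓝 x] fun _ => 0 :=
    eventually_of_mem (hΩopen.mem_nhds hx) fun y hy =>
      fderiv_apply_planeRotGen_eq_zero hΩsym hw hj hy
        ((hu.1.differentiableOn (by norm_num)).differentiableAt (hΩopen.mem_nhds hy))
  have h1 := fderiv_single_zero_eq_mul_fderiv_fderiv (by decide) hD2 (hrot (.inl rfl)) hx1
  have h2 := fderiv_single_zero_eq_mul_fderiv_fderiv (by decide) hD2 (hrot (.inr rfl)) hx2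
  have hlap := hu.2 x hx
  simp only [Fin.sum_univ_four, fderiv_clm_apply_const_apply hD2] at hlap
  linear_combination x 0 * hlap + h1 + h2

theorem axial_laplacian_comp_planeEmb {p : ℝ × ℝ} (hu : ContDiffAt ℝ 2 u (planeEmb p)) :
    p.1 * (pd1 (pd1 (u ∘ planeEmb)) p + pd2 (pd2 (u ∘ planeEmb)) p) + 2 * pd1 (u ∘ planeEmb) p =
      planeEmb p 0 * (fderiv ℝ (fderiv ℝ u) (planeEmb p) (single 0 1) (single 0 1) +
          fderiv ℝ (fderiv ℝ u) (planeEmb p) (single 3 1) (single 3 1)) +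
        2 * fderiv ℝ u (planeEmb p) (single 0 1) := by
  have hu_near : ∀ᶠ y in 𝓝 (planeEmb p), DifferentiableAt ℝ u y :=
    (hu.eventually (by simp)).mono fun y hy => hy.differentiableAt (by norm_num)
  have hD2 : DifferentiableAt ℝ (fderiv ℝ u) (planeEmb p) :=
    (hu.fderiv_right (m := 1) le_rfl).differentiableAt one_ne_zero
  have h1 : pd1 (u ∘ planeEmb) p = fderiv ℝ u (planeEmb p) (single 0 1) := by
    rw [pd1, fderiv_comp_clm_apply planeEmb hu_near.self_of_nhds, planeEmb_one_zero]
  have h11 : pd1 (pd1 (u ∘ planeEmb)) p =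
      fderiv ℝ (fderiv ℝ u) (planeEmb p) (single 0 1) (single 0 1) := by
    rw [← planeEmb_one_zero]
    exact fderiv_fderiv_comp_clm_apply planeEmb hu_near hD2 _ _
  have h22 : pd2 (pd2 (u ∘ planeEmb)) p =
      fderiv ℝ (fderiv ℝ u) (planeEmb p) (single 3 1) (single 3 1) := by
    rw [← planeEmb_zero_one]
    exact fderiv_fderiv_comp_clm_apply planeEmb hu_near hD2 _ _
  simp [h1, h11, h22]

end AxialHarmonic

/-- If `u` is an axially-symmetric harmonic function on an axially-symmetric domain
`Ω ⊆ ℝ⁴`, say `u(x,y) = w(|x|, y)`, then `ṽ(ρ,h) = ρ w(|ρ|,h)` is a harmonic function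
on `Ω̃ = {(ρ,h) : (x,h) ∈ Ω for some x with |x| = |ρ|}` which is odd in `ρ`. -/
theorem stmt5 (Ω : Set (EuclideanSpace ℝ (Fin 4))) (hΩopen : IsOpen Ω)
    (hΩsym : ∀ p ∈ Ω, ∀ q : EuclideanSpace ℝ (Fin 4),
      rad4 q = rad4 p → q 3 = p 3 → q ∈ Ω)
    (u : EuclideanSpace ℝ (Fin 4) → ℝ) (hu : HarmonicOnE u Ω)
    (w : ℝ → ℝ → ℝ) (hw : ∀ p ∈ Ω, u p = w (rad4 p) (p 3)) :
    HarmonicOn2 (fun q => q.1 * w |q.1| q.2)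
        {q : ℝ × ℝ | ∃ p ∈ Ω, rad4 p = |q.1| ∧ p 3 = q.2} ∧
      ∀ q : ℝ × ℝ, (-q.1) * w |(-q.1)| q.2 = -(q.1 * w |q.1| q.2) := by
  refine ⟨?_, fun q => by rw [abs_neg]; ring⟩
  rw [axialSection_eq_preimage_planeEmb hΩsym]
  have hS : IsOpen (planeEmb ⁻¹' Ω) := hΩopen.preimage planeEmb.continuous
  have hrestrict : ContDiffOn ℝ 2 (u ∘ planeEmb) (planeEmb ⁻¹' Ω) :=
    hu.1.comp planeEmb.contDiff.contDiffOn fun _ hq => hq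
  refine (harmonicOn2_fst_mul hS hrestrict fun p hp => ?_).congr hS fun q hq => ?_
  · rw [axial_laplacian_comp_planeEmb (hu.1.contDiffAt (hΩopen.mem_nhds hp))]
    exact hu.axial_laplacian_eq_zero hΩopen hΩsym hw hp (by simp) (by simp)
  · simp [hw _ hq, rad4_planeEmb]
end

section
/- Let v be subharmonic on a rectangle P ⊂ ℝ² with v(x,y) ≤ M̃(y) for a measurable M̃, let F(t) = λ₁({y : M̃(y) ≥ t}), and let C > 0. Then v(z₀) ≤ C for every z₀ ∈ P satisfying ∑_{i=−1}^{∞} F(2^i C) < (π/8) d(z₀, ∂P). -/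
open MeasureTheory

open Metric Set

lemma isOpen_rect (a b : ℝ) : IsOpen (Rect a b) := by
  have h : Rect a b = {z : ℂ | |z.re| < a} ∩ {z : ℂ | |z.im| < b} := rfl
  rw [h]
  exact (isOpen_lt (continuous_abs.comp Complex.continuous_re) continuous_const).inter
    (isOpen_lt (continuous_abs.comp Complex.continuous_im) continuous_const)

lemma vol_reProdIm (A S : Set ℝ) :
    volume {w : ℂ | w.re ∈ A ∧ w.im ∈ S} = volume A * volume S := by
  have h : {w : ℂ | w.re ∈ A ∧ w.im ∈ S} = Complex.measurableEquivRealProd ⁻¹' (A ×ˢ S) := by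
    ext w; simp [Complex.measurableEquivRealProd_apply, Set.mem_prod]
  rw [h, Complex.volume_preserving_equiv_real_prod.measure_preimage_equiv,
    Measure.volume_eq_prod, Measure.prod_prod]

lemma strip_bound {a b r t : ℝ} {z : ℂ} {Mt : ℝ → ℝ}
    (hsub : Metric.closedBall z r ⊆ Rect a b) :
    volume (Metric.closedBall z r ∩ Complex.im ⁻¹' {y | t ≤ Mt y})
      ≤ ENNReal.ofReal (2 * r) * volume {y | y ∈ Set.Ioo (-b) b ∧ t ≤ Mt y} := by
  have hsub2 : Metric.closedBall z r ∩ Complex.im ⁻¹' {y | t ≤ Mt y}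
      ⊆ {w : ℂ | w.re ∈ Set.Icc (z.re - r) (z.re + r) ∧ w.im ∈ {y | y ∈ Set.Ioo (-b) b ∧ t ≤ Mt y}} := by
    rintro w ⟨hwB, hwT⟩
    have hwR := hsub hwB
    have hdist : dist w z ≤ r := hwB
    have hre : |w.re - z.re| ≤ r := by
      have h1 : |(w - z).re| ≤ ‖w - z‖ := Complex.abs_re_le_norm _
      rw [Complex.sub_re] at h1
      rw [Complex.dist_eq] at hdist
      linarith
    have h2 := abs_le.1 hre
    have h3 := abs_lt.1 hwR.2
    exact ⟨Set.mem_Icc.2 ⟨by linarith, by linarith⟩, ⟨Set.mem_Ioo.2 ⟨h3.1, h3.2⟩, hwT⟩⟩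
  calc volume (Metric.closedBall z r ∩ Complex.im ⁻¹' {y | t ≤ Mt y})
      ≤ volume {w : ℂ | w.re ∈ Set.Icc (z.re - r) (z.re + r) ∧ w.im ∈ {y | y ∈ Set.Ioo (-b) b ∧ t ≤ Mt y}} :=
        measure_mono hsub2
    _ = ENNReal.ofReal (2 * r) * volume {y | y ∈ Set.Ioo (-b) b ∧ t ≤ Mt y} := by
        rw [vol_reProdIm, Real.volume_Icc]; ring_nf

lemma keyA {a b : ℝ} {v : ℂ → ℝ} (hv : SubharmonicOn v (Rect a b))
    {Mt : ℝ → ℝ} (hMmeas : Measurable Mt)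
    (hbd : ∀ w ∈ Rect a b, v w ≤ Mt w.im)
    {z : ℂ} {r t : ℝ} (hr : 0 < r) (ht : 0 < t)
    (hsub : Metric.closedBall z r ⊆ Rect a b)
    (hvz : t ≤ v z)
    (hball : ∀ᵐ w ∂(volume.restrict (Metric.closedBall z r)),
      t / 2 ≤ Mt w.im → v w < 2 * t) :
    Real.pi * r ^ 2
      < 4 * (volume (Metric.closedBall z r ∩ Complex.im ⁻¹' {y | t / 2 ≤ Mt y})).toReal := by
  set B := Metric.closedBall z r with hB
  have hBmeas : MeasurableSet B := measurableSet_closedBall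
  have hvBfin : volume B < ⊤ := measure_closedBall_lt_top
  set vB := (volume B).toReal with hvBdef
  have hvBpos : 0 < vB :=
    ENNReal.toReal_pos (measure_closedBall_pos volume z hr).ne' hvBfin.ne
  have hvB_eq : vB = Real.pi * r ^ 2 := by
    rw [hvBdef, hB, Complex.volume_closedBall, ENNReal.toReal_mul, ← ENNReal.ofReal_pow hr.le,
      ENNReal.toReal_ofReal (by positivity)]
    simp [mul_comm]
  set T : Set ℂ := Complex.im ⁻¹' {y | t / 2 ≤ Mt y} with hT
  have hTmeas : MeasurableSet T :=
    Complex.measurable_im (measurableSet_le measurable_const hMmeas)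
  set m := (volume (B ∩ T)).toReal with hm
  have hmnn : 0 ≤ m := ENNReal.toReal_nonneg
  -- the comparison function
  set f : ℂ → ℝ := fun w => t / 2 + T.indicator (fun _ => 2 * t) w with hf
  have hfint : IntegrableOn f B := by
    refine (integrableOn_const hvBfin.ne).add ?_
    exact (integrableOn_const hvBfin.ne).indicator hTmeas
  have hintf : ∫ w in B, f w = t / 2 * vB + 2 * t * m := by
    rw [hf, integral_add (integrableOn_const (C := t / 2) hvBfin.ne)
      ((integrableOn_const (C := 2 * t) hvBfin.ne).indicator hTmeas)]
    rw [setIntegral_const, setIntegral_indicator hTmeas, setIntegral_const]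
    simp [smul_eq_mul, mul_comm, hm, hvBdef, Measure.real]
  -- a.e. strict bound v < f on B
  have hvf : ∀ᵐ w ∂(volume.restrict B), v w < f w := by
    filter_upwards [ae_restrict_mem hBmeas, hball] with w hwB hwT
    by_cases hwT' : w ∈ T
    · have h1 := hwT hwT'
      have h2 : f w = t / 2 + 2 * t := by rw [hf]; simp [Set.indicator_of_mem hwT']
      rw [h2]; linarith
    · have h1 : Mt w.im < t / 2 := by
        by_contra h; exact hwT' (not_lt.1 h)
      have h2 : f w = t / 2 := by rw [hf]; simp [Set.indicator_of_notMem hwT']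
      have h3 : v w ≤ Mt w.im := hbd w (hsub hwB)
      rw [h2]; linarith
  have hmean : t ≤ ⨍ w in B, v w := le_trans hvz (hv.2 z r hr hsub)
  have havg : ⨍ w in B, v w = vB⁻¹ * ∫ w in B, v w := by
    rw [setAverage_eq, smul_eq_mul, hvBdef]
    rfl
  by_cases hvi : IntegrableOn v B
  · have hle : ∫ w in B, v w ≤ ∫ w in B, f w :=
      integral_mono_ae hvi hfint (hvf.mono fun w hw => hw.le)
    have hlt : ∫ w in B, v w < ∫ w in B, f w := by
      rcases hle.lt_or_eq with h | h
      · exact h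
      · exfalso
        have hgint : Integrable (fun w => f w - v w) (volume.restrict B) := hfint.sub hvi
        have h0 : ∫ w in B, (f w - v w) = 0 := by
          rw [integral_sub hfint hvi, h]; ring
        have hnn : 0 ≤ᵐ[volume.restrict B] fun w => f w - v w :=
          hvf.mono fun w hw => by simp [sub_nonneg, hw.le]
        have hz0 := (integral_eq_zero_iff_of_nonneg_ae hnn hgint).1 h0
        have hfalse : ∀ᵐ w ∂(volume.restrict B), False := by
          filter_upwards [hz0, hvf] with w hw1 hw2
          have : f w - v w = 0 := hw1
          linarith
        have h1 : volume.restrict B Set.univ = 0 := by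
          simpa using hfalse
        rw [Measure.restrict_apply_univ] at h1
        exact (measure_closedBall_pos volume z hr).ne' h1
    have h1 : t * vB ≤ ∫ w in B, v w := by
      rw [havg] at hmean
      have h2 := mul_le_mul_of_nonneg_right hmean hvBpos.le
      rwa [mul_comm vB⁻¹ _, mul_assoc, inv_mul_cancel₀ hvBpos.ne', mul_one] at h2
    have hfinal : t * vB < t / 2 * vB + 2 * t * m := by
      rw [← hintf]; exact lt_of_le_of_lt h1 hlt
    rw [← hvB_eq]
    nlinarith
  · exfalso
    have h0 : ⨍ w in B, v w = 0 := by
      rw [havg, integral_undef hvi, mul_zero]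
    rw [h0] at hmean; linarith

lemma double {a b : ℝ} {v : ℂ → ℝ} (hv : SubharmonicOn v (Rect a b))
    {Mt : ℝ → ℝ} (hMmeas : Measurable Mt)
    (hbd : ∀ w ∈ Rect a b, v w ≤ Mt w.im)
    {F : ℝ → ENNReal}
    (hF : ∀ t, F t = volume {y | y ∈ Set.Ioo (-b) b ∧ t ≤ Mt y})
    (hb : 0 < b)
    {z : ℂ} (hz : z ∈ Rect a b) {t : ℝ} (ht : 0 < t) (hvz : t ≤ v z)
    (hsub : Metric.closedBall z (8 / Real.pi * (F (t / 2)).toReal) ⊆ Rect a b) :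
    ∃ w ∈ Rect a b, dist w z ≤ 8 / Real.pi * (F (t / 2)).toReal ∧ 2 * t ≤ v w := by
  have hπ := Real.pi_pos
  have hFfin : F (t / 2) ≠ ⊤ := by
    rw [hF]
    exact (lt_of_le_of_lt (measure_mono fun y hy => hy.1)
      (by rw [Real.volume_Ioo]; exact ENNReal.ofReal_lt_top)).ne
  set Ft := (F (t / 2)).toReal with hFt
  have hFtnn : 0 ≤ Ft := ENNReal.toReal_nonneg
  set ρ := 8 / Real.pi * Ft with hρ
  have hρnn : 0 ≤ ρ := by positivity
  rcases hρnn.eq_or_lt with hρ0 | hρpos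
  · -- ρ = 0 : derive False
    exfalso
    have hFt0 : Ft = 0 := by
      have h8 : (0:ℝ) < 8 / Real.pi := by positivity
      nlinarith
    have hF0 : F (t / 2) = 0 := by
      rcases (ENNReal.toReal_eq_zero_iff _).1 hFt0 with h | h
      · exact h
      · exact absurd h hFfin
    obtain ⟨ε, hε, hballsub⟩ := Metric.isOpen_iff.1 (isOpen_rect a b) z hz
    have hr2 : (0:ℝ) < ε / 2 := by linarith
    have hsub2 : Metric.closedBall z (ε / 2) ⊆ Rect a b :=
      le_trans (Metric.closedBall_subset_ball (by linarith)) hballsub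
    have hnull : volume (Metric.closedBall z (ε / 2) ∩ Complex.im ⁻¹' {y | t / 2 ≤ Mt y}) = 0 := by
      refine le_antisymm ?_ zero_le
      calc volume (Metric.closedBall z (ε / 2) ∩ Complex.im ⁻¹' {y | t / 2 ≤ Mt y})
          ≤ ENNReal.ofReal (2 * (ε / 2)) * volume {y | y ∈ Set.Ioo (-b) b ∧ t / 2 ≤ Mt y} :=
            strip_bound hsub2
        _ = 0 := by rw [← hF]; rw [hF0]; simp
    have hball : ∀ᵐ w ∂(volume.restrict (Metric.closedBall z (ε / 2))),
        t / 2 ≤ Mt w.im → v w < 2 * t := by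
      have h1 : ∀ᵐ w ∂volume,
          w ∉ Metric.closedBall z (ε / 2) ∩ Complex.im ⁻¹' {y | t / 2 ≤ Mt y} :=
        (measure_eq_zero_iff_ae_notMem).1 hnull
      filter_upwards [ae_restrict_mem measurableSet_closedBall, ae_restrict_of_ae h1]
        with w hwB hw1 hwT
      exact absurd ⟨hwB, hwT⟩ hw1
    have := keyA hv hMmeas hbd hr2 ht hsub2 hvz hball
    rw [hnull] at this
    simp only [ENNReal.toReal_zero, mul_zero] at this
    nlinarith
  · -- ρ > 0
    by_contra hcon
    push_neg at hcon
    have hball : ∀ᵐ w ∂(volume.restrict (Metric.closedBall z ρ)),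
        t / 2 ≤ Mt w.im → v w < 2 * t := by
      refine (ae_restrict_iff' measurableSet_closedBall).2 (Filter.Eventually.of_forall ?_)
      intro w hwB _
      exact hcon w (hsub hwB) hwB
    have hkey := keyA hv hMmeas hbd hρpos ht hsub hvz hball
    have hm : (volume (Metric.closedBall z ρ ∩ Complex.im ⁻¹' {y | t / 2 ≤ Mt y})).toReal
        ≤ 2 * ρ * Ft := by
      have h1 := strip_bound (Mt := Mt) (t := t / 2) hsub
      rw [← hF] at h1
      have h2 : (ENNReal.ofReal (2 * ρ) * F (t / 2)).toReal = 2 * ρ * Ft := by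
        rw [ENNReal.toReal_mul, ENNReal.toReal_ofReal (by positivity)]
      calc (volume (Metric.closedBall z ρ ∩ Complex.im ⁻¹' {y | t / 2 ≤ Mt y})).toReal
          ≤ (ENNReal.ofReal (2 * ρ) * F (t / 2)).toReal :=
            ENNReal.toReal_mono (by
              exact ENNReal.mul_ne_top ENNReal.ofReal_ne_top hFfin) h1
        _ = 2 * ρ * Ft := h2
    -- π ρ² < 8 ρ Ft = π ρ · ρ  ⇒ contradiction
    have hfinal : Real.pi * ρ ^ 2 < 8 * ρ * Ft := by nlinarith
    have : Real.pi * ρ = 8 * Ft := by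
      rw [hρ]; field_simp
    nlinarith

/-- Domar's iteration: let `v` be subharmonic on the rectangle `P`, `v ≤ M̃(y)`,
`F(t) = λ₁{y : M̃(y) ≥ t}`, and suppose `C > 0` satisfies
`∑_{i=-1}^{∞} F(2^i C) < (π/8) d(z₀, ∂P)`. If `v(z₀) > C` then there is a sequence
`(z_i)` in `P` with `z_0 = z₀`, `v(z_i) ≥ 2^i C` and
`|z_{i+1} - z_i| ≤ (8/π) F(2^{i-1} C)`; since this contradicts upper semicontinuity at the
limit point, in fact `v(z₀) ≤ C`. -/
theorem stmt18 (a b : ℝ) (ha : 0 < a) (hb : 0 < b)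
    (v : ℂ → ℝ) (hv : SubharmonicOn v (Rect a b))
    (Mt : ℝ → ℝ) (hMmeas : Measurable Mt)
    (hbd : ∀ w ∈ Rect a b, v w ≤ Mt w.im)
    (F : ℝ → ENNReal)
    (hF : ∀ t, F t = volume {y | y ∈ Set.Ioo (-b) b ∧ t ≤ Mt y})
    (z₀ : ℂ) (hz₀ : z₀ ∈ Rect a b) (C : ℝ) (hC : 0 < C)
    (hd : (∑' i : ℕ, F ((2 : ℝ) ^ ((i : ℤ) - 1) * C)) <
      ENNReal.ofReal (Real.pi / 8 * Metric.infDist z₀ (Rect a b)ᶜ)) :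
    (C < v z₀ →
      ∃ z : ℕ → ℂ, z 0 = z₀ ∧ (∀ i, z i ∈ Rect a b) ∧
        (∀ i : ℕ, (2 : ℝ) ^ i * C ≤ v (z i)) ∧
        (∀ i : ℕ, dist (z (i + 1)) (z i) ≤
          8 / Real.pi * (F ((2 : ℝ) ^ ((i : ℤ) - 1) * C)).toReal)) ∧
      v z₀ ≤ C := by
  have hπ := Real.pi_pos
  set d := Metric.infDist z₀ (Rect a b)ᶜ with hdd
  set G : ℕ → ENNReal := fun i => F ((2 : ℝ) ^ ((i : ℤ) - 1) * C) with hG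
  have hGfin : ∀ i, G i ≠ ⊤ := by
    intro i
    show F ((2 : ℝ) ^ ((i : ℤ) - 1) * C) ≠ ⊤
    rw [hF]
    exact (lt_of_le_of_lt (measure_mono fun y hy => hy.1)
      (by rw [Real.volume_Ioo]; exact ENNReal.ofReal_lt_top)).ne
  have htsum_fin : ∑' i, G i ≠ ⊤ := hd.ne_top
  set ρ : ℕ → ℝ := fun i => 8 / Real.pi * (G i).toReal with hρ
  have hρnn : ∀ i, 0 ≤ ρ i := fun i => by positivity
  have hsummable : Summable (fun i => (G i).toReal) := ENNReal.summable_toReal htsum_fin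
  have hρsum : Summable ρ := hsummable.mul_left _
  have hDlt : ∑' i, ρ i < d := by
    have h1 : (∑' i, G i).toReal < Real.pi / 8 * d :=
      (ENNReal.lt_ofReal_iff_toReal_lt htsum_fin).1 hd
    have h2 : (∑' i, ρ i) = 8 / Real.pi * (∑' i, G i).toReal := by
      rw [hρ, tsum_mul_left, ENNReal.tsum_toReal_eq hGfin]
    have h3 : 8 / Real.pi * ((∑' i, G i).toReal) < 8 / Real.pi * (Real.pi / 8 * d) :=
      mul_lt_mul_of_pos_left h1 (by positivity)
    have h4 : 8 / Real.pi * (Real.pi / 8 * d) = d := by field_simp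
    rw [h2]; linarith
  have hball_sub : ∀ w : ℂ, dist w z₀ < d → w ∈ Rect a b := by
    intro w hw
    by_contra hw'
    have := Metric.infDist_le_dist_of_mem (x := z₀) (s := (Rect a b)ᶜ) hw'
    rw [dist_comm] at this
    exact absurd (lt_of_le_of_lt this hw) (lt_irrefl _)
  set Dp : ℕ → ℝ := fun i => ∑ j ∈ Finset.range i, ρ j with hDp
  have hDple : ∀ i, Dp i ≤ ∑' j, ρ j := fun i => hρsum.sum_le_tsum _ (fun j _ => hρnn j)
  suffices hkey : ¬ (C < v z₀) by
    exact ⟨fun h => absurd h hkey, not_lt.1 hkey⟩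
  intro hCv
  set Inv : ℕ → ℂ → Prop :=
    fun i z => z ∈ Rect a b ∧ (2 : ℝ) ^ i * C ≤ v z ∧ dist z z₀ ≤ Dp i with hInv
  have hstep : ∀ i z, Inv i z → ∃ w, Inv (i + 1) w ∧ dist w z ≤ ρ i := by
    rintro i z ⟨hzR, hvzi, hdz⟩
    have hhalf : ((2 : ℝ) ^ i * C) / 2 = (2 : ℝ) ^ ((i : ℤ) - 1) * C := by
      have h5 : (2 : ℝ) ^ ((i : ℤ) - 1) = 2 ^ i / 2 := by
        rw [zpow_sub₀ (two_ne_zero), zpow_one, zpow_natCast]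
      rw [h5]; ring
    have hρi : 8 / Real.pi * (F (((2 : ℝ) ^ i * C) / 2)).toReal = ρ i := by
      rw [hhalf]
    have hsubB : Metric.closedBall z (ρ i) ⊆ Rect a b := by
      intro w hw
      apply hball_sub
      have hw' : dist w z ≤ ρ i := hw
      calc dist w z₀ ≤ dist w z + dist z z₀ := dist_triangle _ _ _
        _ ≤ ρ i + Dp i := add_le_add hw' hdz
        _ = Dp (i + 1) := by
              show ρ i + ∑ j ∈ Finset.range i, ρ j = ∑ j ∈ Finset.range (i + 1), ρ j
              rw [Finset.sum_range_succ]; ring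
        _ ≤ ∑' j, ρ j := hDple (i + 1)
        _ < d := hDlt
    have ht2 : (0 : ℝ) < 2 ^ i * C := by positivity
    obtain ⟨w, hwR, hwd, hwv⟩ := double hv hMmeas hbd hF hb hzR ht2 hvzi (by rw [hρi]; exact hsubB)
    rw [hρi] at hwd
    refine ⟨w, ⟨hwR, ?_, ?_⟩, hwd⟩
    · have : (2 : ℝ) ^ (i + 1) * C = 2 * (2 ^ i * C) := by ring
      rw [this]; exact hwv
    · calc dist w z₀ ≤ dist w z + dist z z₀ := dist_triangle _ _ _
        _ ≤ ρ i + Dp i := add_le_add hwd hdz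
        _ = Dp (i + 1) := by
              show ρ i + ∑ j ∈ Finset.range i, ρ j = ∑ j ∈ Finset.range (i + 1), ρ j
              rw [Finset.sum_range_succ]; ring
  choose! next hnext using hstep
  set zs : ℕ → ℂ := fun n => Nat.rec (motive := fun _ => ℂ) z₀ (fun i zi => next i zi) n with hzs
  have hzsInv : ∀ i, Inv i (zs i) := by
    intro i
    induction i with
    | zero =>
      refine ⟨hz₀, by simpa [hzs] using hCv.le, ?_⟩
      simp [hzs, hDp, Dp]
    | succ i ih => exact (hnext i (zs i) ih).1
  have hzsd : ∀ i, dist (zs (i + 1)) (zs i) ≤ ρ i := fun i => (hnext i (zs i) (hzsInv i)).2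
  have hcauchy : CauchySeq zs :=
    cauchySeq_of_dist_le_of_summable ρ (fun n => by rw [dist_comm]; exact hzsd n) hρsum
  obtain ⟨zl, hlim⟩ := cauchySeq_tendsto_of_complete hcauchy
  have hzld : dist zl z₀ ≤ ∑' j, ρ j := by
    have h1 : Filter.Tendsto (fun n => dist (zs n) z₀) Filter.atTop (nhds (dist zl z₀)) :=
      hlim.dist tendsto_const_nhds
    exact le_of_tendsto h1 (Filter.Eventually.of_forall fun n =>
      le_trans (hzsInv n).2.2 (hDple n))
  have hzlR : zl ∈ Rect a b := hball_sub _ (lt_of_le_of_lt hzld hDlt)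
  have husc := hv.1 zl hzlR (v zl + 1) (lt_add_one _)
  have hlim' : Filter.Tendsto zs Filter.atTop (nhdsWithin zl (Rect a b)) := by
    rw [tendsto_nhdsWithin_iff]
    exact ⟨hlim, Filter.Eventually.of_forall fun n => (hzsInv n).1⟩
  have hev : ∀ᶠ n in Filter.atTop, v (zs n) < v zl + 1 := hlim'.eventually husc
  rw [Filter.eventually_atTop] at hev
  obtain ⟨N, hN⟩ := hev
  obtain ⟨M, hM⟩ := exists_nat_gt ((v zl + 1) / C)
  have hM2 : ((v zl + 1) / C) < 2 ^ M := by
    have := Nat.lt_two_pow_self (n := M)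
    have h2 : (M : ℝ) < 2 ^ M := by exact_mod_cast this
    linarith
  set n := max N M with hn
  have h2n : (2 : ℝ) ^ M ≤ 2 ^ n := by
    apply pow_le_pow_right₀ (by norm_num)
    exact le_max_right _ _
  have hbig : v zl + 1 ≤ 2 ^ n * C := by
    have h1 : v zl + 1 < 2 ^ M * C := by
      rw [div_lt_iff₀ hC] at hM2; linarith
    nlinarith
  have hsmall := hN n (le_max_left _ _)
  have hge := (hzsInv n).2.1
  linarith
end
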